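/- For all constants C_E ≥ 1, M ≥ 0, K₁ ≥ 0, K₂ ≥ 0, K₃ ≥ 0 there exists C ≥ 0 such that the following holds. Let E be a real Banach space, A : E →L[ℝ] E with ‖exp(-tA)‖ ≤ C_E for all t ≥ 0, let g : E → E be twice continuously (Fréchet) differentiable with ‖g(x)‖ ≤ M, ‖g'(x)‖ ≤ M, ‖g''(x)‖ ≤ M for all x ∈ E, let 0 < h ≤ 1, and let u : ℝ → E solve u'(t) = -A(u t) + g(u t) on [0,h] with u 0 = u₀. Assume: (i) the map Ψ₀(σ) = exp(-(1-σ)hA)( g(exp(-σhA)u₀) ) is differentiable on [0,1] with ‖Ψ₀'(σ)‖ ≤ K₁·h for all σ ∈ [0,1] and Ψ₀' Lipschitz on [0,1] with constant K₂·h²; (ii) the map Ψ₁(σ₁,σ₂) = exp(-(1-σ₁)hA)( (Dg)(exp(-σ₁hA)u₀)( exp(-(σ₁-σ₂)hA)( g(exp(-σ₂hA)u₀) ) ) ) is Lipschitz on {0 ≤ σ₂ ≤ σ₁ ≤ 1} with constant K₃·h (with respect to the sum of the coordinate distances). Define the Lawson–Heun step: U₂ = exp(-hA)(u₀ + h • g(u₀))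 and u₁ = exp(-hA)u₀ + (h/2) • ( exp(-hA)(g(u₀)) + g(U₂) ). Then ‖u(h) - u₁‖ ≤ C · h³. -/

import Mathlib

/-
Variation of constants gives `u h = e^{-hA} u₀ + h ∫₀¹ Φ` with `Φ σ = e^{-(1-σ)hA} g (u (σh))`,
while the Lawson–Heun step is `e^{-hA} u₀ + (h/2) (Φ 0 + g U₂)`: the trapezoidal rule for `Φ`, with
`Φ 1 = g (u h)` replaced by `g U₂`. The trapezoidal rule is exact on affine functions, and `Φ` is
`O(h²)`-close to one: `Ψ₀` is, by its `C^{1,1}` bound, and linearising `g` around the free flow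
`e^{-σhA} u₀` shows `Φ σ - Ψ₀ σ = σ h Ψ₁(1,0) + O(h²)`, the error of freezing the arguments of
`Ψ₁` being controlled by its Lipschitz bound. Finally `u h - U₂ = h ∫₀¹ (Φ σ - Φ 0) = O(h²)`, so
replacing `g (u h)` by `g U₂` costs only `O(h³)` after multiplication by `h/2`.
-/

noncomputable def opexp {E : Type*} [NormedAddCommGroup E] [NormedSpace ℝ E]
    [CompleteSpace E] (A : E →L[ℝ] E) (t : ℝ) : E →L[ℝ] E :=
  NormedSpace.exp (t • A)

open Set intervalIntegral
open MeasureTheory (volume)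

section Semigroup

variable {E : Type*} [NormedAddCommGroup E] [NormedSpace ℝ E] [CompleteSpace E] (A : E →L[ℝ] E)

@[simp]
lemma opexp_zero : opexp A 0 = 1 := by
  simp [opexp]

lemma hasDerivAt_opexp (t : ℝ) : HasDerivAt (opexp A) (opexp A t * A) t :=
  hasDerivAt_exp_smul_const A t

lemma continuous_opexp : Continuous (opexp A) :=
  continuous_iff_continuousAt.mpr fun t => (hasDerivAt_opexp A t).continuousAt

variable {A} {C_E : ℝ}

lemma norm_opexp_neg_apply_le (hA : ∀ t : ℝ, 0 ≤ t → ‖opexp A (-t)‖ ≤ C_E) {t : ℝ}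
    (ht : 0 ≤ t) (x : E) : ‖opexp A (-t) x‖ ≤ C_E * ‖x‖ :=
  (opexp A (-t)).le_of_opNorm_le (hA t ht) x

lemma opexp_variation_of_constants {u f : ℝ → E} {T : ℝ} (hT : 0 ≤ T)
    (hu : ∀ t ∈ Icc 0 T, HasDerivAt u (-(A (u t)) + f t) t) (hf : ContinuousOn f (Icc 0 T)) :
    u T = opexp A (-T) (u 0) + ∫ s in 0..T, opexp A (-(T - s)) (f s) := by
  have hderiv : ∀ s ∈ uIcc 0 T, HasDerivAt (fun s => opexp A (-(T - s)) (u s))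
      (opexp A (-(T - s)) (f s)) s := by
    intro s hs
    rw [uIcc_of_le hT] at hs
    have hS : HasDerivAt (fun s : ℝ => -(T - s)) 1 s := by
      simpa using (hasDerivAt_id s).sub_const T
    refine (((hasDerivAt_opexp A _).scomp s hS).clm_apply (hu s hs)).congr_deriv ?_
    simp only [one_smul, Function.comp_apply, ContinuousLinearMap.mul_def,
      ContinuousLinearMap.comp_apply, map_add, map_neg]
    abel
  have hint : IntervalIntegrable (fun s => opexp A (-(T - s)) (f s)) volume 0 T :=
    (((continuous_opexp A).comp (by fun_prop)).continuousOn.clm_apply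
      (by rwa [uIcc_of_le hT])).intervalIntegrable
  rw [integral_eq_sub_of_hasDerivAt hderiv hint]
  simp

end Semigroup

section Calculus

variable {E F : Type*} [NormedAddCommGroup E] [NormedSpace ℝ E]
  [NormedAddCommGroup F] [NormedSpace ℝ F]

lemma norm_integral_le_of_norm_le_of_mem_Icc {f : ℝ → E} {C σ : ℝ} (hC : 0 ≤ C)
    (hσ : σ ∈ Icc (0 : ℝ) 1) (hf : ∀ τ ∈ Ioc 0 σ, ‖f τ‖ ≤ C) : ‖∫ τ in 0..σ, f τ‖ ≤ C :=
  calc ‖∫ τ in 0..σ, f τ‖ ≤ C * |σ - 0| :=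
        norm_integral_le_of_norm_le_const (by rwa [uIoc_of_le hσ.1])
    _ ≤ C * 1 := by gcongr; rw [sub_zero, abs_of_nonneg hσ.1]; exact hσ.2
    _ = C := mul_one C

lemma norm_sub_le_of_forall_norm_fderiv_le {g : E → F} {M : ℝ} (hg : Differentiable ℝ g)
    (hM : ∀ x, ‖fderiv ℝ g x‖ ≤ M) (x y : E) : ‖g y - g x‖ ≤ M * ‖y - x‖ :=
  convex_univ.norm_image_sub_le_of_norm_fderiv_le (fun z _ => hg z) (fun z _ => hM z)
    (mem_univ x) (mem_univ y)

lemma norm_sub_sub_fderiv_le_of_contDiff_two {g : E → F} {M : ℝ} (hg : ContDiff ℝ 2 g)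
    (hM : ∀ x, ‖iteratedFDeriv ℝ 2 g x‖ ≤ M) (x y : E) :
    ‖g y - g x - fderiv ℝ g x (y - x)‖ ≤ M * ‖y - x‖ ^ 2 := by
  have hg' : Differentiable ℝ (fderiv ℝ g) :=
    (hg.fderiv_right (m := 1) le_rfl).differentiable one_ne_zero
  have hM' : ∀ z, ‖fderiv ℝ (fderiv ℝ g) z‖ ≤ M := fun z => by
    rw [← norm_iteratedFDeriv_one, norm_iteratedFDeriv_fderiv]; exact hM z
  have hball : ∀ z ∈ Metric.closedBall x ‖y - x‖, ‖fderiv ℝ g z - fderiv ℝ g x‖ ≤ M * ‖y - x‖ :=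
    fun z hz => (norm_sub_le_of_forall_norm_fderiv_le hg' hM' x z).trans <| by
      gcongr
      · exact (norm_nonneg (fderiv ℝ (fderiv ℝ g) x)).trans (hM' x)
      · rwa [← dist_eq_norm]
  have := (convex_closedBall x ‖y - x‖).norm_image_sub_le_of_norm_fderiv_le'
    (fun z _ => (hg.differentiable two_ne_zero).differentiableAt) hball
    (Metric.mem_closedBall_self (norm_nonneg _)) (by rw [Metric.mem_closedBall, dist_eq_norm])
  rwa [mul_assoc, ← sq] at this

lemma norm_sub_affine_le_of_lipschitzOnWith_deriv {f : ℝ → E} {L : NNReal}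
    (hf : ∀ σ ∈ Icc (0 : ℝ) 1, DifferentiableAt ℝ f σ)
    (hlip : LipschitzOnWith L (deriv f) (Icc 0 1)) {σ : ℝ} (hσ : σ ∈ Icc (0 : ℝ) 1) :
    ‖f σ - (f 0 + σ • deriv f 0)‖ ≤ L := by
  have hderiv : ∀ s ∈ Icc (0 : ℝ) 1, HasDerivWithinAt (fun s => f s - s • deriv f 0)
      (deriv f s - deriv f 0) (Icc 0 1) s := fun s hs => by
    simpa using ((hf s hs).hasDerivAt.fun_sub ((hasDerivAt_id s).smul_const (deriv f 0)))
      |>.hasDerivWithinAt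
  have hbound : ∀ s ∈ Ico (0 : ℝ) 1, ‖deriv f s - deriv f 0‖ ≤ L := fun s hs => by
    have hs' : s ∈ Icc (0 : ℝ) 1 := Ico_subset_Icc_self hs
    calc ‖deriv f s - deriv f 0‖ ≤ L * ‖s - 0‖ := by
          simpa [dist_eq_norm] using hlip.dist_le_mul s hs' 0 (left_mem_Icc.2 zero_le_one)
      _ ≤ L * 1 := by gcongr; rw [sub_zero, Real.norm_of_nonneg hs.1]; exact hs.2.le
      _ = L := mul_one _
  calc ‖f σ - (f 0 + σ • deriv f 0)‖ = ‖(f σ - σ • deriv f 0) - (f 0 - (0 : ℝ) • deriv f 0)‖ := by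
        congr 1; simp only [zero_smul, sub_zero]; abel
    _ ≤ L * (σ - 0) := norm_image_sub_le_of_norm_deriv_le_segment' hderiv hbound σ hσ
    _ ≤ L * 1 := by gcongr; linarith [hσ.2]
    _ = L := mul_one _

variable [CompleteSpace E]

lemma integral_affine_unitInterval (a v : E) :
    ∫ σ in (0 : ℝ)..1, (a + σ • v) = a + (1 / 2 : ℝ) • v := by
  have hv : Continuous fun σ : ℝ => σ • v := by fun_prop
  rw [integral_add intervalIntegrable_const (hv.intervalIntegrable _ _), integral_const,
    intervalIntegral.integral_smul_const, integral_id]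
  norm_num

-- The trapezoidal rule is exact on affine functions, so only the distance `ε` to one enters.
lemma norm_integral_sub_trapezoid_le {f : ℝ → E} {a v : E} {ε : ℝ}
    (hf : ContinuousOn f (Icc 0 1)) (hε : ∀ σ ∈ Icc (0 : ℝ) 1, ‖f σ - (a + σ • v)‖ ≤ ε) :
    ‖(∫ σ in (0 : ℝ)..1, f σ) - (1 / 2 : ℝ) • (f 0 + f 1)‖ ≤ 2 * ε := by
  set e : ℝ → E := fun σ => f σ - (a + σ • v)
  have hε0 : 0 ≤ ε := (norm_nonneg _).trans (hε 0 (left_mem_Icc.2 zero_le_one))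
  have hsplit : (∫ σ in (0 : ℝ)..1, f σ) - (1 / 2 : ℝ) • (f 0 + f 1)
      = (∫ σ in (0 : ℝ)..1, e σ) - (1 / 2 : ℝ) • (e 0 + e 1) := by
    have hfi : IntervalIntegrable f volume 0 1 :=
      (hf.mono (by rw [uIcc_of_le zero_le_one])).intervalIntegrable
    have haff : Continuous fun σ : ℝ => a + σ • v := by fun_prop
    simp only [e, zero_smul, one_smul]
    rw [integral_sub hfi (haff.intervalIntegrable _ _), integral_affine_unitInterval]
    module
  rw [hsplit]
  have he : ∀ σ ∈ Icc (0 : ℝ) 1, ‖e σ‖ ≤ ε := hε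
  calc ‖(∫ σ in (0 : ℝ)..1, e σ) - (1 / 2 : ℝ) • (e 0 + e 1)‖
      ≤ ‖∫ σ in (0 : ℝ)..1, e σ‖ + (1 / 2) * (‖e 0‖ + ‖e 1‖) := by
        refine (norm_sub_le _ _).trans (add_le_add_right ?_ _)
        rw [norm_smul, Real.norm_of_nonneg (by norm_num)]
        gcongr
        exact norm_add_le _ _
    _ ≤ ε + (1 / 2) * (ε + ε) := by
        gcongr
        · exact norm_integral_le_of_norm_le_of_mem_Icc hε0 (right_mem_Icc.2 zero_le_one)
            fun τ hτ => he τ (Ioc_subset_Icc_self hτ)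
        · exact he 0 (left_mem_Icc.2 zero_le_one)
        · exact he 1 (right_mem_Icc.2 zero_le_one)
    _ = 2 * ε := by ring

end Calculus

section LawsonHeun

variable {E : Type*} [NormedAddCommGroup E] [NormedSpace ℝ E]
  {A : E →L[ℝ] E} {g : E → E} {u : ℝ → E} {C_E M h : ℝ}

lemma continuousOn_rescaled_solution (hh : 0 < h)
    (hu : ∀ t ∈ Icc 0 h, HasDerivAt u (-(A (u t)) + g (u t)) t) :
    ContinuousOn (fun τ => u (τ * h)) (Icc 0 1) := fun τ hτ =>
  ((hu _ ⟨by nlinarith [hτ.1], by nlinarith [hτ.2]⟩).continuousAt.comp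
    (continuous_mul_const h).continuousAt).continuousWithinAt

variable [CompleteSpace E]

lemma continuousOn_lawsonIntegrand (hg : Continuous g) (hh : 0 < h)
    (hu : ∀ t ∈ Icc 0 h, HasDerivAt u (-(A (u t)) + g (u t)) t) :
    ContinuousOn (fun σ => opexp A (-((1 - σ) * h)) (g (u (σ * h)))) (Icc 0 1) :=
  ((continuous_opexp A).comp
    (by fun_prop : Continuous fun σ : ℝ => -((1 - σ) * h))).continuousOn.clm_apply
    (hg.comp_continuousOn (continuousOn_rescaled_solution hh hu))

lemma opexp_variation_of_constants_rescaled (hg : Continuous g) (hh : 0 < h)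
    (hu : ∀ t ∈ Icc 0 h, HasDerivAt u (-(A (u t)) + g (u t)) t) {σ : ℝ}
    (hσ : σ ∈ Icc (0 : ℝ) 1) :
    u (σ * h) = opexp A (-(σ * h)) (u 0)
      + h • ∫ τ in 0..σ, opexp A (-((σ - τ) * h)) (g (u (τ * h))) := by
  have hσh : σ * h ≤ h := by nlinarith [hσ.2]
  have hcont : ContinuousOn u (Icc 0 h) := fun t ht => (hu t ht).continuousAt.continuousWithinAt
  simp_rw [sub_mul]
  rw [smul_integral_comp_mul_right (fun s => opexp A (-(σ * h - s)) (g (u s))), zero_mul]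
  exact opexp_variation_of_constants (mul_nonneg hσ.1 hh.le)
    (fun t ht => hu t (Icc_subset_Icc le_rfl hσh ht))
    (hg.comp_continuousOn (hcont.mono (Icc_subset_Icc le_rfl hσh)))

lemma norm_sub_opexp_apply_le (hA : ∀ t : ℝ, 0 ≤ t → ‖opexp A (-t)‖ ≤ C_E)
    (hg : Continuous g) (hgM : ∀ x, ‖g x‖ ≤ M) (hh : 0 < h)
    (hu : ∀ t ∈ Icc 0 h, HasDerivAt u (-(A (u t)) + g (u t)) t) {σ : ℝ}
    (hσ : σ ∈ Icc (0 : ℝ) 1) :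
    ‖u (σ * h) - opexp A (-(σ * h)) (u 0)‖ ≤ C_E * M * h := by
  have hCE : 0 ≤ C_E := (norm_nonneg _).trans (hA 0 le_rfl)
  have hM : 0 ≤ M := (norm_nonneg _).trans (hgM 0)
  have hint : ‖∫ τ in 0..σ, opexp A (-((σ - τ) * h)) (g (u (τ * h)))‖ ≤ C_E * M :=
    norm_integral_le_of_norm_le_of_mem_Icc (by positivity) hσ fun τ hτ =>
      (norm_opexp_neg_apply_le hA (mul_nonneg (sub_nonneg.2 hτ.2) hh.le) _).trans
        (mul_le_mul_of_nonneg_left (hgM _) hCE)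
  rw [opexp_variation_of_constants_rescaled hg hh hu hσ, add_sub_cancel_left, norm_smul,
    Real.norm_of_nonneg hh.le, mul_comm]
  gcongr

lemma norm_opexp_taylorRemainder_le (hA : ∀ t : ℝ, 0 ≤ t → ‖opexp A (-t)‖ ≤ C_E)
    (hg : ContDiff ℝ 2 g) (hgM : ∀ x, ‖g x‖ ≤ M) (hgM'' : ∀ x, ‖iteratedFDeriv ℝ 2 g x‖ ≤ M)
    (hh : 0 < h) (hu : ∀ t ∈ Icc 0 h, HasDerivAt u (-(A (u t)) + g (u t)) t) {σ : ℝ}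
    (hσ : σ ∈ Icc (0 : ℝ) 1) :
    let x := opexp A (-(σ * h)) (u 0)
    ‖opexp A (-((1 - σ) * h)) (g (u (σ * h)) - g x - fderiv ℝ g x (u (σ * h) - x))‖
      ≤ C_E ^ 3 * M ^ 3 * h ^ 2 := by
  intro x
  have hCE : 0 ≤ C_E := (norm_nonneg _).trans (hA 0 le_rfl)
  have hM : 0 ≤ M := (norm_nonneg _).trans (hgM 0)
  calc _ ≤ C_E * ‖g (u (σ * h)) - g x - fderiv ℝ g x (u (σ * h) - x)‖ :=
        norm_opexp_neg_apply_le hA (mul_nonneg (by linarith [hσ.2]) hh.le) _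
    _ ≤ C_E * (M * ‖u (σ * h) - x‖ ^ 2) := by
        gcongr; exact norm_sub_sub_fderiv_le_of_contDiff_two hg hgM'' _ _
    _ ≤ C_E * (M * (C_E * M * h) ^ 2) := by
        gcongr; exact norm_sub_opexp_apply_le hA hg.continuous hgM hh hu hσ
    _ = C_E ^ 3 * M ^ 3 * h ^ 2 := by ring

lemma norm_lawsonIntegrand_sub_freeFlow_le (hA : ∀ t : ℝ, 0 ≤ t → ‖opexp A (-t)‖ ≤ C_E)
    (hg : Differentiable ℝ g) (hgM : ∀ x, ‖g x‖ ≤ M) (hgM' : ∀ x, ‖fderiv ℝ g x‖ ≤ M)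
    (hh : 0 < h) (hu : ∀ t ∈ Icc 0 h, HasDerivAt u (-(A (u t)) + g (u t)) t) {σ : ℝ}
    (hσ : σ ∈ Icc (0 : ℝ) 1) :
    ‖opexp A (-((1 - σ) * h)) (g (u (σ * h)))
        - opexp A (-((1 - σ) * h)) (g (opexp A (-(σ * h)) (u 0)))‖ ≤ C_E ^ 2 * M ^ 2 * h := by
  have hCE : 0 ≤ C_E := (norm_nonneg _).trans (hA 0 le_rfl)
  have hM : 0 ≤ M := (norm_nonneg _).trans (hgM 0)
  calc _ ≤ C_E * ‖g (u (σ * h)) - g (opexp A (-(σ * h)) (u 0))‖ := by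
        rw [← map_sub]
        exact norm_opexp_neg_apply_le hA (mul_nonneg (by linarith [hσ.2]) hh.le) _
    _ ≤ C_E * (M * (C_E * M * h)) := by
        gcongr
        exact (norm_sub_le_of_forall_norm_fderiv_le hg hgM' _ _).trans
          (by gcongr; exact norm_sub_opexp_apply_le hA hg.continuous hgM hh hu hσ)
    _ = C_E ^ 2 * M ^ 2 * h := by ring

lemma norm_linearized_integrand_sub_le (hA : ∀ t : ℝ, 0 ≤ t → ‖opexp A (-t)‖ ≤ C_E)
    (hg : Differentiable ℝ g) (hgM : ∀ x, ‖g x‖ ≤ M) (hgM' : ∀ x, ‖fderiv ℝ g x‖ ≤ M)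
    (hh : 0 < h) (hu : ∀ t ∈ Icc 0 h, HasDerivAt u (-(A (u t)) + g (u t)) t) {P : E} {δ : ℝ}
    (hP : ∀ σ τ : ℝ, 0 ≤ τ → τ ≤ σ → σ ≤ 1 →
      ‖opexp A (-((1 - σ) * h)) (fderiv ℝ g (opexp A (-(σ * h)) (u 0))
        (opexp A (-((σ - τ) * h)) (g (opexp A (-(τ * h)) (u 0))))) - P‖ ≤ δ)
    {σ τ : ℝ} (hτ : 0 ≤ τ) (hτσ : τ ≤ σ) (hσ : σ ≤ 1) :
    ‖opexp A (-((1 - σ) * h)) (fderiv ℝ g (opexp A (-(σ * h)) (u 0))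
        (opexp A (-((σ - τ) * h)) (g (u (τ * h))))) - P‖ ≤ C_E ^ 3 * M ^ 3 * h + δ := by
  have hCE : 0 ≤ C_E := (norm_nonneg _).trans (hA 0 le_rfl)
  have hM : 0 ≤ M := (norm_nonneg _).trans (hgM 0)
  set x := opexp A (-(σ * h)) (u 0)
  set y := opexp A (-(τ * h)) (u 0)
  have hgy : ‖g (u (τ * h)) - g y‖ ≤ M * (C_E * M * h) :=
    (norm_sub_le_of_forall_norm_fderiv_le hg hgM' _ _).trans <| by
      gcongr
      exact norm_sub_opexp_apply_le hA hg.continuous hgM hh hu ⟨hτ, hτσ.trans hσ⟩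
  have hpert : ‖opexp A (-((1 - σ) * h)) (fderiv ℝ g x
      (opexp A (-((σ - τ) * h)) (g (u (τ * h)) - g y)))‖ ≤ C_E ^ 3 * M ^ 3 * h :=
    calc _ ≤ C_E * ‖fderiv ℝ g x (opexp A (-((σ - τ) * h)) (g (u (τ * h)) - g y))‖ :=
          norm_opexp_neg_apply_le hA (mul_nonneg (by linarith) hh.le) _
      _ ≤ C_E * (M * ‖opexp A (-((σ - τ) * h)) (g (u (τ * h)) - g y)‖) := by
          gcongr; exact (fderiv ℝ g x).le_of_opNorm_le (hgM' x) _
      _ ≤ C_E * (M * (C_E * ‖g (u (τ * h)) - g y‖)) := by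
          gcongr; exact norm_opexp_neg_apply_le hA (mul_nonneg (by linarith) hh.le) _
      _ ≤ C_E * (M * (C_E * (M * (C_E * M * h)))) := by gcongr
      _ = C_E ^ 3 * M ^ 3 * h := by ring
  have hsplit : opexp A (-((1 - σ) * h)) (fderiv ℝ g x
        (opexp A (-((σ - τ) * h)) (g (u (τ * h))))) - P
      = opexp A (-((1 - σ) * h)) (fderiv ℝ g x (opexp A (-((σ - τ) * h)) (g (u (τ * h)) - g y)))
        + (opexp A (-((1 - σ) * h)) (fderiv ℝ g x (opexp A (-((σ - τ) * h)) (g y))) - P) := by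
    simp only [map_sub]; abel
  rw [hsplit]
  exact (norm_add_le _ _).trans (add_le_add hpert (hP σ τ hτ hτσ hσ))

lemma norm_integrand_sub_freeFlow_sub_smul_le (hA : ∀ t : ℝ, 0 ≤ t → ‖opexp A (-t)‖ ≤ C_E)
    (hg : ContDiff ℝ 2 g) (hgM : ∀ x, ‖g x‖ ≤ M) (hgM' : ∀ x, ‖fderiv ℝ g x‖ ≤ M)
    (hgM'' : ∀ x, ‖iteratedFDeriv ℝ 2 g x‖ ≤ M)
    (hh : 0 < h) (hu : ∀ t ∈ Icc 0 h, HasDerivAt u (-(A (u t)) + g (u t)) t) {P : E} {δ : ℝ}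
    (hP : ∀ σ τ : ℝ, 0 ≤ τ → τ ≤ σ → σ ≤ 1 →
      ‖opexp A (-((1 - σ) * h)) (fderiv ℝ g (opexp A (-(σ * h)) (u 0))
        (opexp A (-((σ - τ) * h)) (g (opexp A (-(τ * h)) (u 0))))) - P‖ ≤ δ)
    {σ : ℝ} (hσ : σ ∈ Icc (0 : ℝ) 1) :
    ‖opexp A (-((1 - σ) * h)) (g (u (σ * h)))
        - opexp A (-((1 - σ) * h)) (g (opexp A (-(σ * h)) (u 0))) - (h * σ) • P‖
      ≤ 2 * C_E ^ 3 * M ^ 3 * h ^ 2 + h * δ := by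
  have hCE : 0 ≤ C_E := (norm_nonneg _).trans (hA 0 le_rfl)
  have hM : 0 ≤ M := (norm_nonneg _).trans (hgM 0)
  have hδ : 0 ≤ δ := (norm_nonneg _).trans (hP 0 0 le_rfl le_rfl zero_le_one)
  have hgd : Differentiable ℝ g := hg.differentiable two_ne_zero
  set x := opexp A (-(σ * h)) (u 0)
  set S := opexp A (-((1 - σ) * h))
  set L := S.comp (fderiv ℝ g x)
  set F : ℝ → E := fun τ => opexp A (-((σ - τ) * h)) (g (u (τ * h)))
  set r := g (u (σ * h)) - g x - fderiv ℝ g x (u (σ * h) - x)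
  have hw : u (σ * h) - x = h • ∫ τ in 0..σ, F τ := by
    rw [opexp_variation_of_constants_rescaled hg.continuous hh hu hσ, add_sub_cancel_left]
  have hFc : ContinuousOn F (uIcc 0 σ) :=
    ((continuous_opexp A).comp (by fun_prop)).continuousOn.clm_apply
      (hg.continuous.comp_continuousOn ((continuousOn_rescaled_solution hh hu).mono
        (by rw [uIcc_of_le hσ.1]; exact Icc_subset_Icc le_rfl hσ.2)))
  have hLF : IntervalIntegrable (fun τ => L (F τ)) volume 0 σ :=
    (L.continuous.comp_continuousOn hFc).intervalIntegrable
  have hsplit : S (g (u (σ * h))) - S (g x) - (h * σ) • P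
      = h • (∫ τ in 0..σ, (L (F τ) - P)) + S r := by
    rw [integral_sub hLF intervalIntegrable_const, integral_const,
      L.intervalIntegral_comp_comm hFc.intervalIntegrable, smul_sub, ← map_smul, ← hw]
    simp only [L, r, ContinuousLinearMap.comp_apply, map_sub]
    module
  have hlin : ‖∫ τ in 0..σ, (L (F τ) - P)‖ ≤ C_E ^ 3 * M ^ 3 * h + δ :=
    norm_integral_le_of_norm_le_of_mem_Icc (by positivity) hσ fun τ hτ =>
      norm_linearized_integrand_sub_le hA hgd hgM hgM' hh hu hP hτ.1.le hτ.2 hσ.2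
  have hr : ‖S r‖ ≤ C_E ^ 3 * M ^ 3 * h ^ 2 :=
    norm_opexp_taylorRemainder_le hA hg hgM hgM'' hh hu hσ
  rw [hsplit]
  calc ‖h • (∫ τ in 0..σ, (L (F τ) - P)) + S r‖
      ≤ h * (C_E ^ 3 * M ^ 3 * h + δ) + C_E ^ 3 * M ^ 3 * h ^ 2 := by
        refine (norm_add_le _ _).trans (add_le_add ?_ hr)
        rw [norm_smul, Real.norm_of_nonneg hh.le]
        gcongr
    _ = 2 * C_E ^ 3 * M ^ 3 * h ^ 2 + h * δ := by ring

lemma norm_sub_lawsonEuler_le (hA : ∀ t : ℝ, 0 ≤ t → ‖opexp A (-t)‖ ≤ C_E)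
    (hg : Differentiable ℝ g) (hgM : ∀ x, ‖g x‖ ≤ M) (hgM' : ∀ x, ‖fderiv ℝ g x‖ ≤ M)
    (hh : 0 < h) (hu : ∀ t ∈ Icc 0 h, HasDerivAt u (-(A (u t)) + g (u t)) t) {K₁ : ℝ}
    (hΨdiff : ∀ σ ∈ Icc (0 : ℝ) 1, DifferentiableAt ℝ
      (fun σ : ℝ => opexp A (-((1 - σ) * h)) (g (opexp A (-(σ * h)) (u 0)))) σ)
    (hΨderiv : ∀ σ ∈ Icc (0 : ℝ) 1,
      ‖deriv (fun σ : ℝ => opexp A (-((1 - σ) * h)) (g (opexp A (-(σ * h)) (u 0)))) σ‖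
        ≤ K₁ * h) :
    ‖u h - opexp A (-h) (u 0 + h • g (u 0))‖ ≤ (K₁ + C_E ^ 2 * M ^ 2) * h ^ 2 := by
  have hK₁ : 0 ≤ K₁ * h := (norm_nonneg _).trans (hΨderiv 0 (left_mem_Icc.2 zero_le_one))
  set Ψ₀ : ℝ → E := fun σ => opexp A (-((1 - σ) * h)) (g (opexp A (-(σ * h)) (u 0)))
  set Φ : ℝ → E := fun σ => opexp A (-((1 - σ) * h)) (g (u (σ * h)))
  have hΨ₀ : ∀ σ ∈ Icc (0 : ℝ) 1, ‖Ψ₀ σ - Ψ₀ 0‖ ≤ K₁ * h := fun σ hσ =>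
    calc ‖Ψ₀ σ - Ψ₀ 0‖ ≤ K₁ * h * (σ - 0) :=
          norm_image_sub_le_of_norm_deriv_le_segment'
            (fun s hs => (hΨdiff s hs).hasDerivAt.hasDerivWithinAt)
            (fun s hs => hΨderiv s (Ico_subset_Icc_self hs)) σ hσ
      _ ≤ K₁ * h * 1 := by gcongr; linarith [hσ.2]
      _ = K₁ * h := mul_one _
  have hΦ : ∀ σ ∈ Icc (0 : ℝ) 1, ‖Φ σ - Φ 0‖ ≤ (K₁ + C_E ^ 2 * M ^ 2) * h := fun σ hσ => by
    have hΦ0 : Φ 0 = Ψ₀ 0 := by simp [Φ, Ψ₀]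
    calc ‖Φ σ - Φ 0‖ = ‖(Ψ₀ σ - Ψ₀ 0) + (Φ σ - Ψ₀ σ)‖ := by rw [hΦ0]; congr 1; abel
      _ ≤ K₁ * h + C_E ^ 2 * M ^ 2 * h :=
          (norm_add_le _ _).trans (add_le_add (hΨ₀ σ hσ)
            (norm_lawsonIntegrand_sub_freeFlow_le hA hg hgM hgM' hh hu hσ))
      _ = (K₁ + C_E ^ 2 * M ^ 2) * h := by ring
  have hΦi : IntervalIntegrable Φ volume 0 1 :=
    (continuousOn_lawsonIntegrand hg.continuous hh hu).intervalIntegrable_of_Icc zero_le_one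
  have hsol :=
    opexp_variation_of_constants_rescaled hg.continuous hh hu (right_mem_Icc.2 zero_le_one)
  rw [one_mul] at hsol
  have hdiff : u h - opexp A (-h) (u 0 + h • g (u 0)) = h • ∫ σ in (0 : ℝ)..1, (Φ σ - Φ 0) := by
    rw [integral_sub hΦi intervalIntegrable_const, integral_const, hsol]
    simp [Φ]
    module
  rw [hdiff, norm_smul, Real.norm_of_nonneg hh.le]
  calc h * ‖∫ σ in (0 : ℝ)..1, (Φ σ - Φ 0)‖ ≤ h * ((K₁ + C_E ^ 2 * M ^ 2) * h) := by
        gcongr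
        exact norm_integral_le_of_norm_le_of_mem_Icc
          (by rw [add_mul]; exact add_nonneg hK₁ (by positivity)) (right_mem_Icc.2 zero_le_one)
          fun σ hσ => hΦ σ (Ioc_subset_Icc_self hσ)
    _ = (K₁ + C_E ^ 2 * M ^ 2) * h ^ 2 := by ring

lemma norm_lawsonIntegrand_sub_affine_le (hA : ∀ t : ℝ, 0 ≤ t → ‖opexp A (-t)‖ ≤ C_E)
    (hg : ContDiff ℝ 2 g) (hgM : ∀ x, ‖g x‖ ≤ M) (hgM' : ∀ x, ‖fderiv ℝ g x‖ ≤ M)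
    (hgM'' : ∀ x, ‖iteratedFDeriv ℝ 2 g x‖ ≤ M)
    (hh : 0 < h) (hu : ∀ t ∈ Icc 0 h, HasDerivAt u (-(A (u t)) + g (u t)) t) {L : NNReal}
    (hΨdiff : ∀ σ ∈ Icc (0 : ℝ) 1, DifferentiableAt ℝ
      (fun σ : ℝ => opexp A (-((1 - σ) * h)) (g (opexp A (-(σ * h)) (u 0)))) σ)
    (hΨlip : LipschitzOnWith L
      (deriv (fun σ : ℝ => opexp A (-((1 - σ) * h)) (g (opexp A (-(σ * h)) (u 0))))) (Icc 0 1))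
    {P : E} {δ : ℝ}
    (hP : ∀ σ τ : ℝ, 0 ≤ τ → τ ≤ σ → σ ≤ 1 →
      ‖opexp A (-((1 - σ) * h)) (fderiv ℝ g (opexp A (-(σ * h)) (u 0))
        (opexp A (-((σ - τ) * h)) (g (opexp A (-(τ * h)) (u 0))))) - P‖ ≤ δ)
    {σ : ℝ} (hσ : σ ∈ Icc (0 : ℝ) 1) :
    let Ψ₀ : ℝ → E := fun σ => opexp A (-((1 - σ) * h)) (g (opexp A (-(σ * h)) (u 0)))
    ‖opexp A (-((1 - σ) * h)) (g (u (σ * h))) - (Ψ₀ 0 + σ • (deriv Ψ₀ 0 + h • P))‖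
      ≤ L + (2 * C_E ^ 3 * M ^ 3 * h ^ 2 + h * δ) := by
  intro Ψ₀
  calc _ = ‖(Ψ₀ σ - (Ψ₀ 0 + σ • deriv Ψ₀ 0))
          + (opexp A (-((1 - σ) * h)) (g (u (σ * h))) - Ψ₀ σ - (h * σ) • P)‖ := by
        congr 1; module
    _ ≤ _ := (norm_add_le _ _).trans <| add_le_add
        (norm_sub_affine_le_of_lipschitzOnWith_deriv hΨdiff hΨlip hσ)
        (norm_integrand_sub_freeFlow_sub_smul_le hA hg hgM hgM' hgM'' hh hu hP hσ)

lemma lawsonHeun_error_eq (hg : Continuous g) (hh : 0 < h)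
    (hu : ∀ t ∈ Icc 0 h, HasDerivAt u (-(A (u t)) + g (u t)) t) :
    let Φ : ℝ → E := fun σ => opexp A (-((1 - σ) * h)) (g (u (σ * h)))
    let U₂ := opexp A (-h) (u 0 + h • g (u 0))
    u h - (opexp A (-h) (u 0) + (h / 2) • (opexp A (-h) (g (u 0)) + g U₂))
      = h • ((∫ σ in (0 : ℝ)..1, Φ σ) - (1 / 2 : ℝ) • (Φ 0 + Φ 1))
        + (h / 2) • (g (u h) - g U₂) := by
  intro Φ U₂
  have hsol := opexp_variation_of_constants_rescaled hg hh hu (right_mem_Icc.2 zero_le_one)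
  rw [one_mul] at hsol
  have hΦ0 : Φ 0 = opexp A (-h) (g (u 0)) := by simp [Φ]
  have hΦ1 : Φ 1 = g (u h) := by simp [Φ]
  rw [hΦ0, hΦ1]
  nth_rw 1 [hsol]
  module

end LawsonHeun

/-- Order theorem for Lawson methods (Theorem 4.5, case `p = 2`) applied to the Lawson
method built from Heun's second-order Runge–Kutta scheme: under `C^{1,1}` regularity (with
the natural `h`-scaling) of the integrand of the order-one elementary integral and `C^{0,1}`
regularity of the integrand of the order-two elementary integral, the local error of the
Lawson–Heun method is `O(h³)`, uniformly in `A`. -/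
theorem stmt_17 (C_E M K₁ K₂ K₃ : ℝ) (hCE : 1 ≤ C_E) (hM : 0 ≤ M)
    (hK₁ : 0 ≤ K₁) (hK₂ : 0 ≤ K₂) (hK₃ : 0 ≤ K₃) :
    ∃ C : ℝ, 0 ≤ C ∧
      ∀ (E : Type) [NormedAddCommGroup E] [NormedSpace ℝ E] [CompleteSpace E]
        (A : E →L[ℝ] E),
        (∀ t : ℝ, 0 ≤ t → ‖opexp A (-t)‖ ≤ C_E) →
        ∀ g : E → E, ContDiff ℝ 2 g →
          (∀ x : E, ‖g x‖ ≤ M) →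
          (∀ x : E, ‖fderiv ℝ g x‖ ≤ M) →
          (∀ x : E, ‖iteratedFDeriv ℝ 2 g x‖ ≤ M) →
        ∀ h : ℝ, 0 < h → h ≤ 1 →
        ∀ (u : ℝ → E) (u₀ : E),
          (∀ t ∈ Set.Icc (0 : ℝ) h, HasDerivAt u (-(A (u t)) + g (u t)) t) →
          u 0 = u₀ →
          -- (i) regularity of the order-one integrand Ψ₀
          (∀ σ ∈ Set.Icc (0 : ℝ) 1, DifferentiableAt ℝ
            (fun σ : ℝ => opexp A (-((1 - σ) * h)) (g (opexp A (-(σ * h)) u₀))) σ) →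
          (∀ σ ∈ Set.Icc (0 : ℝ) 1,
            ‖deriv (fun σ : ℝ => opexp A (-((1 - σ) * h)) (g (opexp A (-(σ * h)) u₀))) σ‖
              ≤ K₁ * h) →
          LipschitzOnWith (Real.toNNReal (K₂ * h ^ 2))
            (deriv (fun σ : ℝ => opexp A (-((1 - σ) * h)) (g (opexp A (-(σ * h)) u₀))))
            (Set.Icc (0 : ℝ) 1) →
          -- (ii) Lipschitz bound for the order-two integrand Ψ₁
          (∀ p q : ℝ × ℝ, 0 ≤ p.2 → p.2 ≤ p.1 → p.1 ≤ 1 →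
            0 ≤ q.2 → q.2 ≤ q.1 → q.1 ≤ 1 →
            ‖opexp A (-((1 - p.1) * h))
                ((fderiv ℝ g (opexp A (-(p.1 * h)) u₀))
                  (opexp A (-((p.1 - p.2) * h)) (g (opexp A (-(p.2 * h)) u₀)))) -
              opexp A (-((1 - q.1) * h))
                ((fderiv ℝ g (opexp A (-(q.1 * h)) u₀))
                  (opexp A (-((q.1 - q.2) * h)) (g (opexp A (-(q.2 * h)) u₀))))‖
              ≤ K₃ * h * (|p.1 - q.1| + |p.2 - q.2|)) →
          -- Lawson–Heun step and local error bound
          ∀ (U₂ u₁ : E),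
            U₂ = opexp A (-h) (u₀ + h • g u₀) →
            u₁ = opexp A (-h) u₀ + (h / 2) • (opexp A (-h) (g u₀) + g U₂) →
            ‖u h - u₁‖ ≤ C * h ^ 3 := by
  refine ⟨2 * (K₂ + 2 * C_E ^ 3 * M ^ 3 + 2 * K₃) + M * (K₁ + C_E ^ 2 * M ^ 2) / 2,
    by positivity, ?_⟩
  intro E _ _ _ A hA g hg hgM hgM' hgM'' h hh _ u u₀ hu hu0 hΨdiff hΨderiv hΨlip hΨ₁ U₂ u₁ hU₂ hu₁
  subst hu0 hU₂ hu₁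
  have hgd : Differentiable ℝ g := hg.differentiable two_ne_zero
  have hP : ∀ σ τ : ℝ, 0 ≤ τ → τ ≤ σ → σ ≤ 1 → _ := fun σ τ hτ hτσ hσ =>
    (hΨ₁ (σ, τ) (1, 0) hτ hτσ hσ le_rfl zero_le_one le_rfl).trans <|
      calc K₃ * h * (|σ - 1| + |τ - 0|) ≤ K₃ * h * 2 := by
            gcongr
            rw [abs_of_nonpos (by linarith), sub_zero, abs_of_nonneg hτ]
            linarith
        _ = 2 * K₃ * h := by ring
  have htrap := norm_integral_sub_trapezoid_le (continuousOn_lawsonIntegrand hg.continuous hh hu)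
    fun σ hσ => norm_lawsonIntegrand_sub_affine_le hA hg hgM hgM' hgM'' hh hu hΨdiff hΨlip hP hσ
  rw [Real.coe_toNNReal _ (by positivity)] at htrap
  have hstage := (norm_sub_le_of_forall_norm_fderiv_le hgd hgM' _ _).trans
    (mul_le_mul_of_nonneg_left (norm_sub_lawsonEuler_le hA hgd hgM hgM' hh hu hΨdiff hΨderiv) hM)
  rw [lawsonHeun_error_eq hg.continuous hh hu]
  calc _ ≤ h * (2 * (K₂ * h ^ 2 + (2 * C_E ^ 3 * M ^ 3 * h ^ 2 + h * (2 * K₃ * h))))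
        + h / 2 * (M * ((K₁ + C_E ^ 2 * M ^ 2) * h ^ 2)) := by
        refine (norm_add_le _ _).trans (add_le_add ?_ ?_) <;>
          rw [norm_smul, Real.norm_of_nonneg (by positivity)] <;> gcongr
    _ = _ := by ring
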